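/- Let d ≥ 5 be an integer. Let g, r₁, r₂ be homogeneous polynomials of degree 2 in ℂ[t₀,t₁] whose ℂ-linear span is V₂, and let h, s₁, …, s_{d−4} be homogeneous polynomials of degree d−4 whose ℂ-linear span is V_{d−4}. Then the ℂ-linear span of {g²h, g·r₁·h, g·r₂·h, g²s₁, …, g²s_{d−4}} equals g·(h·V₂ + g·V_{d−4}). If moreover g and h have no common zero in ℂ² ∖ {(0,0)}, then this span equals g·V_{d−2} and has dimension d−1 over ℂ. -/

import Mathlib

open MvPolynomial

noncomputable section

/-- `V n` is the space of homogeneous polynomials of degree `n` in `ℂ[t₀,t₁]`. -/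
abbrev V (n : ℕ) : Submodule ℂ (MvPolynomial (Fin 2) ℂ) :=
  MvPolynomial.homogeneousSubmodule (Fin 2) ℂ n


def ee (n : ℕ) (i : Fin (n+1)) : Fin 2 →₀ ℕ :=
  Finsupp.single 0 (i : ℕ) + Finsupp.single 1 (n - i)

lemma ee_inj (n : ℕ) : Function.Injective (ee n) := by
  intro i j hij
  have h0 : ee n i 0 = ee n j 0 := by rw [hij]
  simp [ee, Finsupp.single_apply] at h0
  exact Fin.ext h0

lemma mono_li (n : ℕ) :
    LinearIndependent ℂ (fun i : Fin (n+1) => (monomial (ee n i) (1:ℂ))) := by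
  have := ((MvPolynomial.basisMonomials (Fin 2) ℂ).linearIndependent).comp (ee n) (ee_inj n)
  simp [MvPolynomial.coe_basisMonomials, Function.comp] at this
  exact this

lemma degree_fin2 (d : Fin 2 →₀ ℕ) : d.degree = d 0 + d 1 := by
  rw [Finsupp.degree_apply,
    Finset.sum_subset (Finset.subset_univ _)
      (fun i _ hi => Finsupp.notMem_support_iff.mp hi)]
  simp [Fin.sum_univ_two]

lemma V_eq_span (n : ℕ) :
    V n = Submodule.span ℂ (Set.range fun i : Fin (n+1) => (monomial (ee n i) (1:ℂ))) := by
  show homogeneousSubmodule (Fin 2) ℂ n = _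
  rw [MvPolynomial.homogeneousSubmodule_eq_finsupp_supported,
    AddMonoidAlgebra.supported_eq_span_single]
  congr 1
  ext p
  constructor
  · rintro ⟨d, hd, rfl⟩
    have hd2 : d 0 + d 1 = n := by rw [← degree_fin2]; exact hd
    refine ⟨⟨d 0, by omega⟩, ?_⟩
    have hed : ee n ⟨d 0, by omega⟩ = d := by
      ext j
      fin_cases j <;> simp [ee, Finsupp.single_apply] <;> omega
    show (monomial (ee n ⟨d 0, by omega⟩)) 1 = _
    rw [hed]
    rfl
  · rintro ⟨i, rfl⟩
    refine ⟨ee n i, ?_, rfl⟩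
    show (ee n i).degree = n
    have hi : (i : ℕ) ≤ n := by omega
    rw [degree_fin2]
    simp [ee, Finsupp.single_apply]
    omega

lemma finrank_V (n : ℕ) : Module.finrank ℂ (V n) = n + 1 := by
  rw [V_eq_span, finrank_span_eq_card (mono_li n), Fintype.card_fin]

instance fd_V (n : ℕ) : FiniteDimensional ℂ (V n) := by
  rw [V_eq_span]
  exact FiniteDimensional.span_of_finite ℂ (Set.finite_range _)

lemma prime_X0 : Prime (X 0 : MvPolynomial (Fin 2) ℂ) :=
  (MulEquiv.prime_iff (MvPolynomial.finSuccEquiv ℂ 1).toRingEquiv.toMulEquiv).mp (by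
    have h1 : Prime ((MvPolynomial.finSuccEquiv ℂ 1) (X (0 : Fin 2))) := by
      rw [MvPolynomial.finSuccEquiv_X_zero]; exact Polynomial.prime_X
    exact h1)

lemma prime_X1 : Prime (X 1 : MvPolynomial (Fin 2) ℂ) :=
  (MulEquiv.prime_iff
      (MvPolynomial.renameEquiv ℂ (Equiv.swap (0 : Fin 2) 1)).toRingEquiv.toMulEquiv).mp (by
    have h1 : Prime ((MvPolynomial.renameEquiv ℂ (Equiv.swap (0 : Fin 2) 1)) (X 1)) := by
      rw [MvPolynomial.renameEquiv_apply, MvPolynomial.rename_X, Equiv.swap_apply_right]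
      exact prime_X0
    exact h1)

lemma X0_not_dvd_X1 : ¬ (X 0 : MvPolynomial (Fin 2) ℂ) ∣ X 1 := by
  intro hdvd
  have := map_dvd (MvPolynomial.eval ![(0:ℂ), 1]) hdvd
  simp [MvPolynomial.eval_X] at this

lemma relprime (g h : MvPolynomial (Fin 2) ℂ)
    (hzero : ∀ x y : ℂ, (x, y) ≠ (0, 0) →
      MvPolynomial.eval ![x, y] g ≠ 0 ∨ MvPolynomial.eval ![x, y] h ≠ 0) :
    IsRelPrime g h := by
  set I : Ideal (MvPolynomial (Fin 2) ℂ) := Ideal.span {g, h} with hI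
  have hzl : ∀ x ∈ MvPolynomial.zeroLocus ℂ I, x = (0 : Fin 2 → ℂ) := by
    intro x hx
    have hg0 : MvPolynomial.eval x g = 0 := hx g (Ideal.subset_span (by simp))
    have hh0 : MvPolynomial.eval x h = 0 := hx h (Ideal.subset_span (by simp))
    have hxe : x = ![x 0, x 1] := by
      funext i; fin_cases i <;> simp
    by_contra hne
    have hne' : (x 0, x 1) ≠ (0, 0) := by
      intro hc
      rw [Prod.mk.injEq] at hc
      exact hne (funext fun i => by fin_cases i; exacts [hc.1, hc.2])
    rcases hzero (x 0) (x 1) hne' with hc | hc <;> rw [← hxe] at hc <;> tauto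
  have hmem : ∀ i : Fin 2, (X i : MvPolynomial (Fin 2) ℂ) ∈ I.radical := by
    intro i
    rw [← MvPolynomial.vanishingIdeal_zeroLocus_eq_radical (K := ℂ)]
    rw [MvPolynomial.mem_vanishingIdeal_iff]
    intro x hx
    rw [hzl x hx]
    simp
  obtain ⟨N, hN⟩ := Ideal.mem_radical_iff.mp (hmem 0)
  obtain ⟨M, hM⟩ := Ideal.mem_radical_iff.mp (hmem 1)
  obtain ⟨a, b, hab⟩ := Ideal.mem_span_pair.mp hN
  obtain ⟨c, e, hce⟩ := Ideal.mem_span_pair.mp hM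
  intro p hpg hph
  by_contra hpu
  have hp0 : p ∣ (X 0 : MvPolynomial (Fin 2) ℂ) ^ N := by
    rw [← hab]; exact dvd_add (Dvd.dvd.mul_left hpg a) (Dvd.dvd.mul_left hph b)
  have hp1 : p ∣ (X 1 : MvPolynomial (Fin 2) ℂ) ^ M := by
    rw [← hce]; exact dvd_add (Dvd.dvd.mul_left hpg c) (Dvd.dvd.mul_left hph e)
  obtain ⟨i, hiN, hi⟩ := (dvd_prime_pow prime_X0 N).mp hp0
  rcases Nat.eq_zero_or_pos i with rfl | hipos
  · exact hpu (associated_one_iff_isUnit.mp (by simpa using hi))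
  · have hX0p : (X 0 : MvPolynomial (Fin 2) ℂ) ∣ p :=
      (dvd_pow_self (X 0 : MvPolynomial (Fin 2) ℂ) (Nat.pos_iff_ne_zero.mp hipos)).trans
        hi.symm.dvd
    have : (X 0 : MvPolynomial (Fin 2) ℂ) ∣ (X 1 : MvPolynomial (Fin 2) ℂ) ^ M :=
      hX0p.trans hp1
    exact X0_not_dvd_X1 (prime_X0.dvd_of_dvd_pow this)

lemma inter_le (g h : MvPolynomial (Fin 2) ℂ) (m : ℕ)
    (hg : g ∈ V 2) (hrel : IsRelPrime g h) :
    ((V 2).map (LinearMap.mulLeft ℂ h) ⊓ (V m).map (LinearMap.mulLeft ℂ g))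
      ≤ ℂ ∙ (g * h) := by
  rintro x ⟨⟨b, hb, hbx⟩, ⟨a, ha, hax⟩⟩
  simp only [LinearMap.mulLeft_apply] at hbx hax
  have hgb : g ∣ b := by
    refine hrel.dvd_of_dvd_mul_left ?_
    exact ⟨a, by rw [hbx, hax]⟩
  obtain ⟨c, rfl⟩ := hgb
  -- show g * c = g * C (coeff 0 c)
  have hkey : g * c = g * C (MvPolynomial.coeff 0 c) := by
    have h1 : homogeneousComponent 2 (g * c) = g * c :=
      by rw [homogeneousComponent_of_mem hb]; simp
    conv_lhs => rw [← h1]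
    conv_lhs => rw [show g * c = ∑ i ∈ Finset.range (c.totalDegree + 1),
        g * homogeneousComponent i c by
      rw [← Finset.mul_sum, sum_homogeneousComponent]]
    rw [map_sum]
    have h2 : ∀ i ∈ Finset.range (c.totalDegree + 1),
        homogeneousComponent 2 (g * homogeneousComponent i c)
          = if i = 0 then g * homogeneousComponent i c else 0 := by
      intro i _
      have hmem : g * homogeneousComponent i c ∈ homogeneousSubmodule (Fin 2) ℂ (2 + i) :=
        (mem_homogeneousSubmodule _ _).mpr
          ((mem_homogeneousSubmodule _ _).mp hg |>.mul (homogeneousComponent_isHomogeneous i c))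
      rw [homogeneousComponent_of_mem hmem]
      congr 1
      simp only [eq_iff_iff]
      omega
    rw [Finset.sum_congr rfl h2, Finset.sum_ite_eq' _ 0]
    simp [homogeneousComponent_zero]
  rw [Submodule.mem_span_singleton]
  refine ⟨MvPolynomial.coeff 0 c, ?_⟩
  rw [MvPolynomial.smul_eq_C_mul, ← hbx, hkey]
  ring

lemma part1 (d : ℕ) (g r₁ r₂ : MvPolynomial (Fin 2) ℂ)
    (hg : g ∈ V 2)
    (hspan2 : Submodule.span ℂ {g, r₁, r₂} = V 2)
    (h : MvPolynomial (Fin 2) ℂ) (s : Fin (d - 4) → MvPolynomial (Fin 2) ℂ)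
    (hh : h ∈ V (d - 4)) (hs : ∀ i, s i ∈ V (d - 4))
    (hspan4 : Submodule.span ℂ ({h} ∪ Set.range s) = V (d - 4)) :
    Submodule.span ℂ
        ({g ^ 2 * h, g * r₁ * h, g * r₂ * h} ∪ Set.range (fun i => g ^ 2 * s i))
      = ((V 2).map (LinearMap.mulLeft ℂ h) ⊔
          (V (d - 4)).map (LinearMap.mulLeft ℂ g)).map (LinearMap.mulLeft ℂ g) := by
  apply le_antisymm
  · rw [Submodule.span_le]
    rintro x hx
    simp only [Set.mem_union, Set.mem_insert_iff, Set.mem_singleton_iff, Set.mem_range] at hx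
    have memmap : ∀ y, y ∈ ((V 2).map (LinearMap.mulLeft ℂ h) ⊔
        (V (d - 4)).map (LinearMap.mulLeft ℂ g)) →
        g * y ∈ (((V 2).map (LinearMap.mulLeft ℂ h) ⊔
          (V (d - 4)).map (LinearMap.mulLeft ℂ g)).map (LinearMap.mulLeft ℂ g)) :=
      fun y hy => ⟨y, hy, rfl⟩
    rcases hx with (rfl | rfl | rfl) | ⟨i, rfl⟩
    · have : g ^ 2 * h = g * (g * h) := by ring
      rw [this]
      exact memmap _ (Submodule.mem_sup_right ⟨h, hh, rfl⟩)
    · have : g * r₁ * h = g * (h * r₁) := by ring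
      rw [this]
      exact memmap _ (Submodule.mem_sup_left ⟨r₁, by rw [← hspan2]; exact Submodule.subset_span (by simp), rfl⟩)
    · have : g * r₂ * h = g * (h * r₂) := by ring
      rw [this]
      exact memmap _ (Submodule.mem_sup_left ⟨r₂, by rw [← hspan2]; exact Submodule.subset_span (by simp), rfl⟩)
    · have : g ^ 2 * s i = g * (g * s i) := by ring
      rw [this]
      exact memmap _ (Submodule.mem_sup_right ⟨s i, hs i, rfl⟩)
  · rw [Submodule.map_sup]
    apply sup_le
    · rw [← hspan2, Submodule.map_span, Submodule.map_span, Submodule.span_le]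
      rintro x ⟨y, ⟨z, hz, rfl⟩, rfl⟩
      simp only [LinearMap.mulLeft_apply]
      simp only [Set.mem_insert_iff, Set.mem_singleton_iff] at hz
      rcases hz with h1 | h1 | h1 <;> rw [h1]
      · have : g * (h * g) = g ^ 2 * h := by ring
        rw [this]
        exact Submodule.subset_span (by simp)
      · have : g * (h * r₁) = g * r₁ * h := by ring
        rw [this]
        exact Submodule.subset_span (by simp)
      · have : g * (h * r₂) = g * r₂ * h := by ring
        rw [this]
        exact Submodule.subset_span (by simp)
    · rw [← hspan4, Submodule.map_span, Submodule.map_span, Submodule.span_le]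
      rintro x ⟨y, ⟨z, hz, rfl⟩, rfl⟩
      simp only [LinearMap.mulLeft_apply]
      simp only [Set.mem_union, Set.mem_singleton_iff, Set.mem_range] at hz
      rcases hz with h1 | ⟨i, h1⟩
      · rw [h1]
        have : g * (g * h) = g ^ 2 * h := by ring
        rw [this]
        exact Submodule.subset_span (by simp)
      · rw [← h1]
        have : g * (g * s i) = g ^ 2 * s i := by ring
        rw [this]
        exact Submodule.subset_span (by right; exact ⟨i, rfl⟩)

lemma g_ne (g r₁ r₂ : MvPolynomial (Fin 2) ℂ)
    (hspan2 : Submodule.span ℂ {g, r₁, r₂} = V 2) : g ≠ 0 := by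
  rintro rfl
  have h1 : ({(0:MvPolynomial (Fin 2) ℂ), r₁, r₂} : Set _) = insert 0 {r₁, r₂} := rfl
  rw [h1, Submodule.span_insert_zero] at hspan2
  have h2 : ({r₁, r₂} : Set (MvPolynomial (Fin 2) ℂ)) = Set.range ![r₁, r₂] := by
    simp [Matrix.range_cons, Matrix.range_empty]
    exact Set.pair_comm r₁ r₂
  have h3 := finrank_range_le_card (R := ℂ) ![r₁, r₂]
  rw [Set.finrank, ← h2, hspan2, finrank_V] at h3
  simp at h3

lemma h_ne (m : ℕ) (h : MvPolynomial (Fin 2) ℂ) (s : Fin m → MvPolynomial (Fin 2) ℂ)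
    (hspan4 : Submodule.span ℂ ({h} ∪ Set.range s) = V m) : h ≠ 0 := by
  rintro rfl
  rw [Set.singleton_union, Submodule.span_insert_zero] at hspan4
  have h3 := finrank_range_le_card (R := ℂ) s
  rw [Set.finrank, hspan4, finrank_V, Fintype.card_fin] at h3
  omega

lemma sup_eq (d : ℕ) (hd : 5 ≤ d) (g h : MvPolynomial (Fin 2) ℂ)
    (hg : g ∈ V 2) (hh : h ∈ V (d-4)) (hg0 : g ≠ 0) (hh0 : h ≠ 0)
    (hrel : IsRelPrime g h) :
    ((V 2).map (LinearMap.mulLeft ℂ h) ⊔ (V (d - 4)).map (LinearMap.mulLeft ℂ g))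
      = V (d - 2) := by
  set A := (V 2).map (LinearMap.mulLeft ℂ h) with hA
  set B := (V (d-4)).map (LinearMap.mulLeft ℂ g) with hB
  have hAle : A ≤ V (d-2) := by
    rintro x ⟨b, hb, rfl⟩
    show (LinearMap.mulLeft ℂ h) b ∈ V (d-2)
    simp only [LinearMap.mulLeft_apply]
    rw [mem_homogeneousSubmodule]
    have := ((mem_homogeneousSubmodule _ _).mp hh).mul ((mem_homogeneousSubmodule _ _).mp hb)
    convert this using 1
    omega
  have hBle : B ≤ V (d-2) := by
    rintro x ⟨a, ha, rfl⟩
    show (LinearMap.mulLeft ℂ g) a ∈ V (d-2)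
    simp only [LinearMap.mulLeft_apply]
    rw [mem_homogeneousSubmodule]
    have := ((mem_homogeneousSubmodule _ _).mp hg).mul ((mem_homogeneousSubmodule _ _).mp ha)
    convert this using 1
    omega
  have hfA : Module.finrank ℂ A = 3 := by
    rw [← (Submodule.equivMapOfInjective (LinearMap.mulLeft ℂ h) (mul_right_injective₀ hh0) (V 2)).finrank_eq]
    rw [finrank_V]
  have hfB : Module.finrank ℂ B = d - 3 := by
    rw [← (Submodule.equivMapOfInjective (LinearMap.mulLeft ℂ g) (mul_right_injective₀ hg0) (V (d-4))).finrank_eq]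
    rw [finrank_V]
    omega
  haveI : FiniteDimensional ℂ A :=
    Module.Finite.map (V 2) (LinearMap.mulLeft ℂ h)
  haveI : FiniteDimensional ℂ B :=
    Module.Finite.map (V (d-4)) (LinearMap.mulLeft ℂ g)
  have hint : Module.finrank ℂ ↥(A ⊓ B) ≤ 1 := by
    have hle := inter_le g h (d-4) hg hrel
    calc Module.finrank ℂ ↥(A ⊓ B) ≤ Module.finrank ℂ ↥(ℂ ∙ (g*h)) :=
          Submodule.finrank_mono hle
      _ = 1 := finrank_span_singleton (mul_ne_zero hg0 hh0)
  have hsum := Submodule.finrank_sup_add_finrank_inf_eq A B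
  have hVd : Module.finrank ℂ (V (d-2)) = d - 1 := by rw [finrank_V]; omega
  apply Submodule.eq_of_le_of_finrank_le (sup_le hAle hBle)
  rw [hVd]
  omega

/-- The span `A_P = <g²h, gr₁h, gr₂h, g²s₁, …, g²s_{d-4}>` equals
`g·(h·V₂ + g·V_{d-4})`; if moreover `g` and `h` have no common zero in `ℂ² \ {0}`,
it equals `g·V_{d-2}` and has dimension `d-1`. -/
theorem statement1 (d : ℕ) (hd : 5 ≤ d)
    (g r₁ r₂ : MvPolynomial (Fin 2) ℂ)
    (hg : g ∈ V 2) (hr₁ : r₁ ∈ V 2) (hr₂ : r₂ ∈ V 2)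
    (hspan2 : Submodule.span ℂ {g, r₁, r₂} = V 2)
    (h : MvPolynomial (Fin 2) ℂ) (s : Fin (d - 4) → MvPolynomial (Fin 2) ℂ)
    (hh : h ∈ V (d - 4)) (hs : ∀ i, s i ∈ V (d - 4))
    (hspan4 : Submodule.span ℂ ({h} ∪ Set.range s) = V (d - 4)) :
    Submodule.span ℂ
        ({g ^ 2 * h, g * r₁ * h, g * r₂ * h} ∪ Set.range (fun i => g ^ 2 * s i))
      = ((V 2).map (LinearMap.mulLeft ℂ h) ⊔
          (V (d - 4)).map (LinearMap.mulLeft ℂ g)).map (LinearMap.mulLeft ℂ g) ∧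
    ((∀ x y : ℂ, (x, y) ≠ (0, 0) →
        MvPolynomial.eval ![x, y] g ≠ 0 ∨ MvPolynomial.eval ![x, y] h ≠ 0) →
      Submodule.span ℂ
          ({g ^ 2 * h, g * r₁ * h, g * r₂ * h} ∪ Set.range (fun i => g ^ 2 * s i))
        = (V (d - 2)).map (LinearMap.mulLeft ℂ g) ∧
      Module.finrank ℂ
        ↥(Submodule.span ℂ
            ({g ^ 2 * h, g * r₁ * h, g * r₂ * h} ∪ Set.range (fun i => g ^ 2 * s i)))
        = d - 1) := by
  have hp1 := part1 d g r₁ r₂ hg hspan2 h s hh hs hspan4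
  refine ⟨hp1, fun hzero => ?_⟩
  have hrel := relprime g h hzero
  have hg0 := g_ne g r₁ r₂ hspan2
  have hh0 := h_ne (d-4) h s hspan4
  have hsup := sup_eq d hd g h hg hh hg0 hh0 hrel
  have heq : Submodule.span ℂ
      ({g ^ 2 * h, g * r₁ * h, g * r₂ * h} ∪ Set.range (fun i => g ^ 2 * s i))
      = (V (d - 2)).map (LinearMap.mulLeft ℂ g) := by rw [hp1, hsup]
  refine ⟨heq, ?_⟩
  rw [heq,
    ← (Submodule.equivMapOfInjective (LinearMap.mulLeft ℂ g) (mul_right_injective₀ hg0) (V (d-2))).finrank_eq,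
    finrank_V]
  omega
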